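/- (IP-EOS formula for E.) Let (ρ_L, p_L), (ρ_R, p_R) be pairs of positive reals with ρ_L/p_L ≠ ρ_R/p_R. For K ∈ {L,R} set θ_K = p_K/ρ_K, z₂,K = ρ_K/p_K, h_K = 2θ_K + √(1+4θ_K²), S_K = −ln ρ_K + ln θ_K + 2 ln(2θ_K + √(1+4θ_K²)), and W₁,K = z₂,K h_K − S_K. Write {{a}} = (a_L+a_R)/2 for arithmetic means of quantities derived from z₂, and {{a}}_ln for logarithmic means. Then E := (W₁,R − W₁,L − (ln ρ_R − ln ρ_L))/(z₂,R − z₂,L) = 1/{{z₂}}_ln + {{√(1+4/z₂²)}} − ({{2/z₂}}/{{z₂}})·( {{z₂}}·{{2/z₂}}/{{√(1+4/z₂²)}} − 2(1 + {{2/z₂}}/{{√(1+4/z₂²)}})/{{(2/z₂)+√(1+4/z₂²)}}_ln ), where {{(2/z₂)+√(1+4/z₂²)}}_ln is the logarithmic mean of the two values 2/z₂,K + √(1+4/z₂,K²). -/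

import Mathlib

/-!
Write `z = ρ/p`, `θ = 1/z`, `t = 2/z` and `s = √(1 + t²)`, so that `h = t + s =: u`. Then
`W₁ - ln ρ = 2 + z s + ln z - 2 ln u`, hence `E = [z s]/[z] + [ln z]/[z] - 2 [ln u]/[z]`.
The logarithmic jumps become reciprocals of logarithmic means, `[ln a]/[z] = ([a]/[z]) / {{a}}_ln`,
and the two remaining difference quotients are rational in the means because `s² - t² = 1`
and `t z = 2`: `[z s]/[z] = {{s}} - {{t}}²/{{s}}` and `[u]/[z] = -({{t}}/{{z}}) (1 + {{t}}/{{s}})`.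
-/

open Real

noncomputable def ipEnthalpy (θ : ℝ) : ℝ := 2 * θ + √(1 + 4 * θ ^ 2)

noncomputable def ipEntropy (ρ θ : ℝ) : ℝ := -log ρ + log θ + 2 * log (ipEnthalpy θ)

lemma ipEnthalpy_inv (z : ℝ) : ipEnthalpy z⁻¹ = 2 / z + √(1 + 4 / z ^ 2) := by
  rw [ipEnthalpy, inv_pow, ← div_eq_mul_inv, ← div_eq_mul_inv]

lemma mul_ipEnthalpy_inv_sub_ipEntropy_inv {z : ℝ} (ρ : ℝ) (hz : z ≠ 0) :
    z * ipEnthalpy z⁻¹ - ipEntropy ρ z⁻¹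
      = 2 + z * √(1 + 4 / z ^ 2) + log ρ + log z - 2 * log (2 / z + √(1 + 4 / z ^ 2)) := by
  rw [ipEntropy, ipEnthalpy_inv, log_inv, mul_add, mul_div_cancel₀ 2 hz]
  ring

section DifferenceQuotients

variable {x y : ℝ}

lemma sq_mul_sqrt_one_add_four_div_sq (hx : x ≠ 0) : x ^ 2 * √(1 + 4 / x ^ 2) ^ 2 = x ^ 2 + 4 := by
  rw [sq_sqrt (by positivity)]
  field_simp

lemma sub_mul_sqrt_div_sub (hx : x ≠ 0) (hy : y ≠ 0) (hxy : x ≠ y) :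
    (y * √(1 + 4 / y ^ 2) - x * √(1 + 4 / x ^ 2)) / (y - x)
      = (√(1 + 4 / x ^ 2) + √(1 + 4 / y ^ 2)) / 2
        - ((2 / x + 2 / y) / 2) ^ 2 / ((√(1 + 4 / x ^ 2) + √(1 + 4 / y ^ 2)) / 2) := by
  have hsx := sq_mul_sqrt_one_add_four_div_sq hx
  have hsy := sq_mul_sqrt_one_add_four_div_sq hy
  have hsum : √(1 + 4 / x ^ 2) + √(1 + 4 / y ^ 2) ≠ 0 := by positivity
  rw [div_eq_iff (sub_ne_zero.mpr hxy.symm)]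
  generalize √(1 + 4 / x ^ 2) = sx at *
  generalize √(1 + 4 / y ^ 2) = sy at *
  field_simp
  linear_combination (x + y) * (x ^ 2 * hsy - y ^ 2 * hsx)

lemma sub_two_div_add_sqrt_div_sub (hx : 0 < x) (hy : 0 < y) (hxy : x ≠ y) :
    (2 / y + √(1 + 4 / y ^ 2) - (2 / x + √(1 + 4 / x ^ 2))) / (y - x)
      = -(((2 / x + 2 / y) / 2) / ((x + y) / 2)
        * (1 + ((2 / x + 2 / y) / 2) / ((√(1 + 4 / x ^ 2) + √(1 + 4 / y ^ 2)) / 2))) := by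
  have hsx := sq_mul_sqrt_one_add_four_div_sq hx.ne'
  have hsy := sq_mul_sqrt_one_add_four_div_sq hy.ne'
  have hsum : √(1 + 4 / x ^ 2) + √(1 + 4 / y ^ 2) ≠ 0 := by positivity
  rw [div_eq_iff (sub_ne_zero.mpr hxy.symm)]
  generalize √(1 + 4 / x ^ 2) = sx at *
  generalize √(1 + 4 / y ^ 2) = sy at *
  field_simp
  linear_combination (x + y) * (x ^ 2 * hsy - y ^ 2 * hsx)

end DifferenceQuotients

theorem stmt10 (ρL pL ρR pR : ℝ)
    (hρL : 0 < ρL) (hpL : 0 < pL) (hρR : 0 < ρR) (hpR : 0 < pR)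
    (hne : ρL / pL ≠ ρR / pR) :
    let z2L : ℝ := ρL / pL
    let z2R : ℝ := ρR / pR
    let θL : ℝ := pL / ρL
    let θR : ℝ := pR / ρR
    let hL : ℝ := 2 * θL + Real.sqrt (1 + 4 * θL ^ 2)
    let hR : ℝ := 2 * θR + Real.sqrt (1 + 4 * θR ^ 2)
    let SL : ℝ := -Real.log ρL + Real.log θL
      + 2 * Real.log (2 * θL + Real.sqrt (1 + 4 * θL ^ 2))
    let SR : ℝ := -Real.log ρR + Real.log θR
      + 2 * Real.log (2 * θR + Real.sqrt (1 + 4 * θR ^ 2))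
    let W1L : ℝ := z2L * hL - SL
    let W1R : ℝ := z2R * hR - SR
    let lz2 : ℝ := (z2R - z2L) / (Real.log z2R - Real.log z2L)
    let aSq : ℝ := (Real.sqrt (1 + 4 / z2L ^ 2) + Real.sqrt (1 + 4 / z2R ^ 2)) / 2
    let aInv : ℝ := (2 / z2L + 2 / z2R) / 2
    let az2 : ℝ := (z2L + z2R) / 2
    let lu : ℝ := ((2 / z2R + Real.sqrt (1 + 4 / z2R ^ 2))
        - (2 / z2L + Real.sqrt (1 + 4 / z2L ^ 2)))
      / (Real.log (2 / z2R + Real.sqrt (1 + 4 / z2R ^ 2))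
        - Real.log (2 / z2L + Real.sqrt (1 + 4 / z2L ^ 2)))
    (W1R - W1L - (Real.log ρR - Real.log ρL)) / (z2R - z2L)
      = 1 / lz2 + aSq - (aInv / az2) * (az2 * aInv / aSq - 2 * (1 + aInv / aSq) / lu) := by
  intro zL zR θL θR hL hR SL SR W1L W1R lz2 aSq aInv az2 lu
  have hzL : 0 < zL := div_pos hρL hpL
  have hzR : 0 < zR := div_pos hρR hpR
  have hW1L : W1L = zL * ipEnthalpy zL⁻¹ - ipEntropy ρL zL⁻¹ := by rw [inv_div]; rfl
  have hW1R : W1R = zR * ipEnthalpy zR⁻¹ - ipEntropy ρR zR⁻¹ := by rw [inv_div]; rfl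
  rw [mul_ipEnthalpy_inv_sub_ipEntropy_inv ρL hzL.ne'] at hW1L
  rw [mul_ipEnthalpy_inv_sub_ipEntropy_inv ρR hzR.ne'] at hW1R
  set uL := 2 / zL + √(1 + 4 / zL ^ 2)
  set uR := 2 / zR + √(1 + 4 / zR ^ 2)
  have hmul : (zR * √(1 + 4 / zR ^ 2) - zL * √(1 + 4 / zL ^ 2)) / (zR - zL)
      = aSq - aInv ^ 2 / aSq :=
    sub_mul_sqrt_div_sub hzL.ne' hzR.ne' hne
  have hu : (uR - uL) / (zR - zL) = -(aInv / az2 * (1 + aInv / aSq)) :=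
    sub_two_div_add_sqrt_div_sub hzL hzR hne
  have haz2 : az2 ≠ 0 := by positivity
  have haSq : aSq ≠ 0 := by positivity
  have hu0 : uR - uL ≠ 0 := by
    intro h
    have : 0 < aInv / az2 * (1 + aInv / aSq) := by positivity
    rw [h, zero_div] at hu
    linarith
  have hlogu : (log uR - log uL) / (zR - zL) = ((uR - uL) / (zR - zL)) / lu :=
    (div_div_div_cancel_left' _ _ hu0).symm
  have hlogz : (log zR - log zL) / (zR - zL) = 1 / lz2 := (one_div_div _ _).symm
  calc (W1R - W1L - (log ρR - log ρL)) / (zR - zL)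
      = (zR * √(1 + 4 / zR ^ 2) - zL * √(1 + 4 / zL ^ 2)) / (zR - zL)
        + (log zR - log zL) / (zR - zL) - 2 * ((log uR - log uL) / (zR - zL)) := by
        rw [hW1L, hW1R]; ring
    _ = _ := by
      rw [hmul, hlogz, hlogu, hu]
      field_simp
      ring
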